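/- Median-preserving transfers decrease the quantile inequality coefficients: if F, F_Y are CDFs with equal medians m and F_Y(y) ≤ F(y) for y < m, F_Y(y) ≥ F(y) for y > m, then Q_{F_Y}(p) ≥ Q_F(p) for p < 1/2 and Q_{F_Y}(p) ≤ Q_F(p) for p > 1/2; consequently L₁(F;p) ≤ L₁(F_Y;p) for all p ∈ (0,1), and hence G₁(F) ≥ G₁(F_Y). -/

import Mathlib

/-!
Below the common median `m` we have `F_Y ≤ F`, so a point where `F_Y` has reached a level
`p < 1/2` is either one where `F` has reached it too or lies above `m ≥ Q_F(p)`; hence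
`Q_F(p) ≤ Q_{F_Y}(p)`. Above `m` the argument is symmetric, except that monotonicity of `F` is
needed to push a point `x ≥ m` with `F x ≥ p` slightly to the right, into the region where
`F ≤ F_Y`. As `L₁(F;p)` only involves `Q_F(p/2)` with `p/2 < 1/2` and the common median, it
increases pointwise, and `G₁` decreases by monotonicity of the integral; the integrands are
integrable because `L₁(F;·)` is monotone on `[0,1]`.
-/

open Set MeasureTheory

/-- The quantile function of a CDF `F`. -/
noncomputable def quant (F : ℝ → ℝ) (p : ℝ) : ℝ := sInf {x : ℝ | p ≤ F x}

/-- The quantile inequality curve `L₁` of a CDF `F`. -/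
noncomputable def L1curve (F : ℝ → ℝ) (p : ℝ) : ℝ :=
  p * quant F (p / 2) / quant F (1 / 2)

/-- The inequality coefficient `G₁` of a CDF `F`. -/
noncomputable def G1coef (F : ℝ → ℝ) : ℝ := 2 * ∫ p in (0 : ℝ)..1, (p - L1curve F p)

variable {F G : ℝ → ℝ} {p q m x : ℝ}

/- `quant F p ≠ 0` rules out the junk value `sInf s = 0` of an empty or unbounded-below `s`. -/
lemma nonempty_of_quant_ne_zero (h : quant F p ≠ 0) : {x | p ≤ F x}.Nonempty := by
  by_contra hne
  rw [not_nonempty_iff_eq_empty] at hne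
  exact h (by rw [quant, hne, Real.sInf_empty])

lemma bddBelow_of_quant_ne_zero (h : quant F p ≠ 0) : BddBelow {x | p ≤ F x} := by
  by_contra hb
  exact h (by rw [quant, Real.sInf_of_not_bddBelow hb])

lemma quant_le_of_le (h : quant F p ≠ 0) (hx : p ≤ F x) : quant F p ≤ x :=
  csInf_le (bddBelow_of_quant_ne_zero h) hx

lemma quant_mono (hpq : p ≤ q) (hp : quant F p ≠ 0) (hq : quant F q ≠ 0) :
    quant F p ≤ quant F q :=
  csInf_le_csInf (bddBelow_of_quant_ne_zero hp) (nonempty_of_quant_ne_zero hq)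
    fun _ hx => hpq.trans hx

lemma quant_le_quant_of_le_of_lt (hGF : ∀ y < m, G y ≤ F y) (hpm : quant F p ≤ m)
    (hF : quant F p ≠ 0) (hG : quant G p ≠ 0) : quant F p ≤ quant G p := by
  refine le_csInf (nonempty_of_quant_ne_zero hG) fun x hx => ?_
  rcases lt_or_ge x m with hxm | hmx
  · exact quant_le_of_le hF (le_trans hx (hGF x hxm))
  · exact hpm.trans hmx

lemma quant_le_quant_of_le_of_gt (hFmono : Monotone F) (hFG : ∀ y > m, F y ≤ G y)
    (hmp : m ≤ quant F p) (hF : quant F p ≠ 0) (hG : quant G p ≠ 0) :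
    quant G p ≤ quant F p := by
  refine le_csInf (nonempty_of_quant_ne_zero hF) fun x hx => ?_
  have hmx : m ≤ x := hmp.trans (quant_le_of_le hF hx)
  refine le_of_forall_gt_imp_ge_of_dense fun y hxy => quant_le_of_le hG ?_
  calc p ≤ F x := hx
    _ ≤ F y := hFmono hxy.le
    _ ≤ G y := hFG y (hmx.trans_lt hxy)

lemma L1curve_le_L1curve (hp : 0 ≤ p) (hq : quant F (p / 2) ≤ quant G (p / 2))
    (hmed : quant F (1 / 2) = quant G (1 / 2)) (hmed_nonneg : 0 ≤ quant F (1 / 2)) :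
    L1curve F p ≤ L1curve G p := by
  rw [L1curve, L1curve, ← hmed]
  gcongr

lemma monotoneOn_L1curve (hpos : ∀ p ∈ Ioo (0 : ℝ) 1, 0 < quant F p) :
    MonotoneOn (L1curve F) (Icc 0 1) := by
  have hhalf : ∀ p ∈ Ioc (0 : ℝ) 1, 0 < quant F (p / 2) := fun p hp =>
    hpos _ ⟨by linarith [hp.1], by linarith [hp.2]⟩
  have hmed : 0 ≤ quant F (1 / 2) := (hpos _ ⟨by norm_num, by norm_num⟩).le
  intro p hp q hq hpq
  unfold L1curve
  gcongr ?_ / _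
  rcases hp.1.eq_or_lt with rfl | hp0
  · rw [zero_mul]
    rcases hq.1.eq_or_lt with rfl | hq0
    · rw [zero_mul]
    · exact (mul_pos hq0 (hhalf q ⟨hq0, hq.2⟩)).le
  · have hq0 := hp0.trans_le hpq
    exact mul_le_mul hpq
      (quant_mono (by linarith) (hhalf p ⟨hp0, hp.2⟩).ne' (hhalf q ⟨hq0, hq.2⟩).ne')
      (hhalf p ⟨hp0, hp.2⟩).le hq.1

lemma intervalIntegrable_sub_L1curve (hpos : ∀ p ∈ Ioo (0 : ℝ) 1, 0 < quant F p) :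
    IntervalIntegrable (fun p => p - L1curve F p) volume 0 1 :=
  intervalIntegral.intervalIntegrable_id.sub <|
    MonotoneOn.intervalIntegrable (by rw [uIcc_of_le zero_le_one]; exact monotoneOn_L1curve hpos)

lemma G1coef_le_G1coef (hF : ∀ p ∈ Ioo (0 : ℝ) 1, 0 < quant F p)
    (hG : ∀ p ∈ Ioo (0 : ℝ) 1, 0 < quant G p)
    (hL : ∀ p ∈ Ioo (0 : ℝ) 1, L1curve F p ≤ L1curve G p) : G1coef G ≤ G1coef F := by
  unfold G1coef
  gcongr 2 * ?_
  exact intervalIntegral.integral_mono_on_of_le_Ioo zero_le_one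
    (intervalIntegrable_sub_L1curve hG) (intervalIntegrable_sub_L1curve hF)
    fun p hp => sub_le_sub_left (hL p hp) p

theorem stmt_8_general (F FY : ℝ → ℝ) (hFmono : Monotone F)
    (m : ℝ) (hmF : quant F (1 / 2) = m) (hmFY : quant FY (1 / 2) = m)
    (hbelow : ∀ y < m, FY y ≤ F y) (habove : ∀ y > m, F y ≤ FY y)
    (hQFpos : ∀ p ∈ Set.Ioo (0 : ℝ) 1, 0 < quant F p)
    (hQFYpos : ∀ p ∈ Set.Ioo (0 : ℝ) 1, 0 < quant FY p) :
    (∀ p ∈ Set.Ioo (0 : ℝ) (1 / 2), quant F p ≤ quant FY p) ∧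
    (∀ p ∈ Set.Ioo (1 / 2 : ℝ) 1, quant FY p ≤ quant F p) ∧
    (∀ p ∈ Set.Ioo (0 : ℝ) 1, L1curve F p ≤ L1curve FY p) ∧
    G1coef FY ≤ G1coef F := by
  have hmed : 0 < quant F (1 / 2) := hQFpos _ ⟨by norm_num, by norm_num⟩
  have lower : ∀ p ∈ Ioo (0 : ℝ) (1 / 2), quant F p ≤ quant FY p := fun p hp =>
    have hp' : p ∈ Ioo (0 : ℝ) 1 := ⟨hp.1, by linarith [hp.2]⟩
    quant_le_quant_of_le_of_lt hbelow
      (hmF ▸ quant_mono hp.2.le (hQFpos p hp').ne' hmed.ne') (hQFpos p hp').ne'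
      (hQFYpos p hp').ne'
  have upper : ∀ p ∈ Ioo (1 / 2 : ℝ) 1, quant FY p ≤ quant F p := fun p hp =>
    have hp' : p ∈ Ioo (0 : ℝ) 1 := ⟨by linarith [hp.1], hp.2⟩
    quant_le_quant_of_le_of_gt hFmono habove
      (hmF ▸ quant_mono hp.1.le hmed.ne' (hQFpos p hp').ne') (hQFpos p hp').ne'
      (hQFYpos p hp').ne'
  have hL1 : ∀ p ∈ Ioo (0 : ℝ) 1, L1curve F p ≤ L1curve FY p := fun p hp =>
    L1curve_le_L1curve hp.1.le (lower _ ⟨by linarith [hp.1], by linarith [hp.2]⟩)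
      (hmF.trans hmFY.symm) hmed.le
  exact ⟨lower, upper, hL1, G1coef_le_G1coef hQFpos hQFYpos hL1⟩

/-- A median-preserving transfer decreases `G₁`: if `F, F_Y` have common median `m > 0`
with `F_Y ≤ F` below `m` and `F_Y ≥ F` above `m`, then the quantiles satisfy
`Q_{F_Y}(p) ≥ Q_F(p)` for `p < 1/2` and `Q_{F_Y}(p) ≤ Q_F(p)` for `p > 1/2`;
consequently `L₁(F;p) ≤ L₁(F_Y;p)` on `(0,1)`, and hence `G₁(F) ≥ G₁(F_Y)`. -/
theorem stmt_8 (F FY : ℝ → ℝ) (hFmono : Monotone F) (hFYmono : Monotone FY)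
    (m : ℝ) (hm0 : 0 < m) (hmF : quant F (1 / 2) = m) (hmFY : quant FY (1 / 2) = m)
    (hbelow : ∀ y < m, FY y ≤ F y) (habove : ∀ y > m, F y ≤ FY y)
    (hQFpos : ∀ p ∈ Set.Ioo (0 : ℝ) 1, 0 < quant F p)
    (hQFYpos : ∀ p ∈ Set.Ioo (0 : ℝ) 1, 0 < quant FY p) :
    (∀ p ∈ Set.Ioo (0 : ℝ) (1 / 2), quant F p ≤ quant FY p) ∧
    (∀ p ∈ Set.Ioo (1 / 2 : ℝ) 1, quant FY p ≤ quant F p) ∧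
    (∀ p ∈ Set.Ioo (0 : ℝ) 1, L1curve F p ≤ L1curve FY p) ∧
    G1coef FY ≤ G1coef F :=
  stmt_8_general F FY hFmono m hmF hmFY hbelow habove hQFpos hQFYpos
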